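/- For all n ≥ 0 and all real x, y, ρ, q: P_n(x|y,ρ,q) = ∑_{i=0}^n [n choose i]_q ρ^{n-i} B_{n-i}(y|q) H_i(x|q), where P_n are the Al-Salam–Chihara polynomials, H_i the continuous q-Hermite polynomials, and B_m the auxiliary polynomials. -/

import Mathlib

noncomputable def qint (q : ℝ) (n : ℕ) : ℝ := ∑ i ∈ Finset.range n, q ^ i

noncomputable def qfact (q : ℝ) (n : ℕ) : ℝ := ∏ i ∈ Finset.range n, qint q (i + 1)

noncomputable def qPoch (a q : ℝ) (n : ℕ) : ℝ := ∏ i ∈ Finset.range n, (1 - a * q ^ i)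

/-- Gaussian binomial coefficient as a polynomial in `q`, via the Pascal-type recurrence. -/
noncomputable def qbinom (q : ℝ) : ℕ → ℕ → ℝ
  | _, 0 => 1
  | 0, _ + 1 => 0
  | n + 1, k + 1 => qbinom q n k + q ^ (k + 1) * qbinom q n (k + 1)

/-- Rescaled continuous q-Hermite polynomials `H_n(x|q)`. -/
noncomputable def qHermite (q x : ℝ) : ℕ → ℝ
  | 0 => 1
  | 1 => x
  | n + 2 => x * qHermite q x (n + 1) - qint q (n + 1) * qHermite q x n

/-- Chebyshev polynomials of the second kind. -/
noncomputable def Ucheb (x : ℝ) : ℕ → ℝ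
  | 0 => 1
  | 1 => 2 * x
  | n + 2 => 2 * x * Ucheb x (n + 1) - Ucheb x n

/-- Probabilist's Hermite polynomials. -/
noncomputable def He (x : ℝ) : ℕ → ℝ
  | 0 => 1
  | 1 => x
  | n + 2 => x * He x (n + 1) - (n + 1 : ℝ) * He x n

/-- Big q-Hermite polynomials `H_n(x|a,q)`. -/
noncomputable def bigH (q a x : ℝ) (n : ℕ) : ℝ :=
  ∑ i ∈ Finset.range (n + 1),
    qbinom q n i * q ^ (i.choose 2) * (-a) ^ i * qHermite q x (n - i)

/-- Al-Salam--Chihara polynomials `P_n(x|y,ρ,q)`. -/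
noncomputable def ASC (q x y ρ : ℝ) : ℕ → ℝ
  | 0 => 1
  | 1 => x - ρ * y
  | n + 2 =>
      (x - ρ * y * q ^ (n + 1)) * ASC q x y ρ (n + 1)
        - qint q (n + 1) * (1 - ρ ^ 2 * q ^ n) * ASC q x y ρ n

/-- Auxiliary polynomials `B_n(x|q)`. -/
noncomputable def Bpoly (q x : ℝ) : ℕ → ℝ
  | 0 => 1
  | 1 => -x
  | n + 2 => -q ^ (n + 1) * x * Bpoly q x (n + 1) + q ^ n * qint q (n + 1) * Bpoly q x n

/-!
Write the right-hand side as `∑ᵢ c(n, i) H_i(x|q)` with `c(n, i) = [n, i]_q ρ^{n-i} B_{n-i}(y|q)`;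
it suffices that these sums obey the three-term recurrence of `P_n`. Multiplying by `x` turns
`H_i` into `H_{i+1} + [i]_q H_{i-1}`, and splitting `[m+2, i]_q` by the q-Pascal rule, the raised
part of `x P_{m+1}` matches one half of the expansion of `P_{m+2}`. What is left is an identity
between coefficients, which follows from the recurrence of `B` and the absorption identities
`[j+1]_q [m+1, j+1]_q = [m+1]_q [m, j]_q = [m+1-j]_q [m+1, j]_q`.
-/

open Finset

section

variable (q : ℝ)

lemma qint_zero : qint q 0 = 0 := rfl

lemma qint_add (a b : ℕ) : qint q (a + b) = qint q a + q ^ a * qint q b := by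
  simp [qint, sum_range_add, pow_add, mul_sum]

lemma qbinom_zero_right (n : ℕ) : qbinom q n 0 = 1 := by
  cases n <;> rfl

lemma qbinom_succ_succ (n k : ℕ) :
    qbinom q (n + 1) (k + 1) = qbinom q n k + q ^ (k + 1) * qbinom q n (k + 1) := by
  rw [qbinom]

lemma qbinom_eq_zero_of_lt : ∀ {n k : ℕ}, n < k → qbinom q n k = 0
  | 0, _ + 1, _ => rfl
  | n + 1, k + 1, h => by
    rw [qbinom_succ_succ, qbinom_eq_zero_of_lt (by omega), qbinom_eq_zero_of_lt (by omega)]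
    ring

lemma qbinom_self : ∀ n, qbinom q n n = 1
  | 0 => rfl
  | n + 1 => by
    rw [qbinom_succ_succ, qbinom_self n, qbinom_eq_zero_of_lt q (by omega : n < n + 1)]
    ring

/-- The inductive step of each identity uses both at the previous `m`. -/
lemma qint_mul_qbinom (m : ℕ) :
    (∀ j, qint q (j + 1) * qbinom q (m + 1) (j + 1) = qint q (m + 1) * qbinom q m j) ∧
    (∀ j, qint q (m + 1 - j) * qbinom q (m + 1) j = qint q (m + 1) * qbinom q m j) := by
  induction m with
  | zero =>
    refine ⟨fun j => ?_, fun j => ?_⟩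
    · rcases j with _ | j
      · simp [qbinom_self]
      · simp [qbinom_eq_zero_of_lt q (by omega : 1 < j + 2),
          qbinom_eq_zero_of_lt q (by omega : 0 < j + 1)]
    · rcases j with _ | j
      · simp [qbinom_zero_right]
      · simp [show 1 - (j + 1) = 0 by omega, qint_zero,
          qbinom_eq_zero_of_lt q (by omega : 0 < j + 1)]
  | succ m ih =>
    obtain ⟨ihA, ihB⟩ := ih
    have split (j : ℕ) (hj : j ≤ m + 1) :
        qint q (m + 2) = qint q (j + 1) + q ^ (j + 1) * qint q (m + 1 - j) := by
      rw [← qint_add]; congr 1; omega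
    refine ⟨fun j => ?_, fun j => ?_⟩
    · by_cases hj : j ≤ m + 1
      · rw [qbinom_succ_succ, split j hj]
        linear_combination q ^ (j + 1) * ihA j - q ^ (j + 1) * ihB j
      · rw [qbinom_eq_zero_of_lt q (by omega : m + 2 < j + 1),
          qbinom_eq_zero_of_lt q (by omega : m + 1 < j)]
        ring
    · rcases j with _ | j
      · simp [qbinom_zero_right]
      by_cases hj : j ≤ m + 1
      · rw [show m + 2 - (j + 1) = m + 1 - j by omega, qbinom_succ_succ q (m + 1) j, split j hj]
        linear_combination ihB j - ihA j
      · rw [qbinom_eq_zero_of_lt q (by omega : m + 2 < j + 1),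
          qbinom_eq_zero_of_lt q (by omega : m + 1 < j + 1)]
        ring

end

lemma mul_qHermite (q x : ℝ) : ∀ i,
    x * qHermite q x i = qHermite q x (i + 1) + qint q i * qHermite q x (i - 1)
  | 0 => by simp [qHermite, qint_zero]
  | 1 => by simp [qHermite, qint]
  | i + 2 => by simp [qHermite]

lemma mul_sum_qHermite (q x : ℝ) (a : ℕ → ℝ) (N : ℕ) :
    x * ∑ i ∈ range (N + 1), a i * qHermite q x i =
      ∑ i ∈ range (N + 1), a i * qHermite q x (i + 1) +
        ∑ i ∈ range N, qint q (i + 1) * a (i + 1) * qHermite q x i := by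
  have lower : ∑ i ∈ range (N + 1), qint q i * a i * qHermite q x (i - 1) =
      ∑ i ∈ range N, qint q (i + 1) * a (i + 1) * qHermite q x i := by
    simp [sum_range_succ', qint_zero]
  rw [← lower, mul_sum, ← sum_add_distrib]
  refine sum_congr rfl fun i _ => ?_
  linear_combination a i * mul_qHermite q x i

lemma Bpoly_succ_succ (q y : ℝ) (k : ℕ) : Bpoly q y (k + 2) =
    -q ^ (k + 1) * y * Bpoly q y (k + 1) + q ^ k * qint q (k + 1) * Bpoly q y k := by
  rw [Bpoly]

lemma ASC_succ_succ (q x y ρ : ℝ) (m : ℕ) : ASC q x y ρ (m + 2) =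
    (x - ρ * y * q ^ (m + 1)) * ASC q x y ρ (m + 1)
      - qint q (m + 1) * (1 - ρ ^ 2 * q ^ m) * ASC q x y ρ m := by
  rw [ASC]

noncomputable def ascCoeff (q y ρ : ℝ) (n i : ℕ) : ℝ :=
  qbinom q n i * ρ ^ (n - i) * Bpoly q y (n - i)

section

variable (q x y ρ : ℝ)

lemma ascCoeff_eq_zero_of_lt {n i : ℕ} (h : n < i) : ascCoeff q y ρ n i = 0 := by
  simp [ascCoeff, qbinom_eq_zero_of_lt q h]

lemma sum_range_ascCoeff_mul_of_le (f : ℕ → ℝ) {n N : ℕ} (h : n + 1 ≤ N) :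
    ∑ i ∈ range N, ascCoeff q y ρ n i * f i = ∑ i ∈ range (n + 1), ascCoeff q y ρ n i * f i :=
  eventually_constant_sum (fun i hi => by rw [ascCoeff_eq_zero_of_lt q y ρ hi, zero_mul]) h

/-- The q-Pascal rule `[n+1, i] = [n, i-1] + q^i [n, i]` splits the expansion of `P_{n+1}`; its
first part is the expansion of `P_n` with every `H_i` raised to `H_{i+1}`. -/
lemma sum_ascCoeff_succ (n : ℕ) :
    ∑ i ∈ range (n + 2), ascCoeff q y ρ (n + 1) i * qHermite q x i =
      ∑ i ∈ range (n + 1), ascCoeff q y ρ n i * qHermite q x (i + 1) +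
        ∑ i ∈ range (n + 2),
          q ^ i * qbinom q n i * ρ ^ (n + 1 - i) * Bpoly q y (n + 1 - i) * qHermite q x i := by
  rw [sum_range_succ' _ (n + 1), sum_range_succ' _ (n + 1), add_left_comm, ← add_assoc,
    ← sum_add_distrib]
  congr 1
  · refine sum_congr rfl fun i _ => ?_
    rw [ascCoeff, ascCoeff, qbinom_succ_succ, show n + 1 - (i + 1) = n - i by omega]
    ring
  · simp [ascCoeff, qbinom_zero_right]

/-- The coefficient of `H_i` in the recurrence, once the raised part of `x P_{m+1}` has cancelled
the first part of `sum_ascCoeff_succ`. -/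
lemma ascCoeff_recurrence (m i : ℕ) :
    q ^ i * qbinom q (m + 1) i * ρ ^ (m + 2 - i) * Bpoly q y (m + 2 - i) =
      qint q (i + 1) * ascCoeff q y ρ (m + 1) (i + 1)
        - ρ * y * q ^ (m + 1) * ascCoeff q y ρ (m + 1) i
        - qint q (m + 1) * (1 - ρ ^ 2 * q ^ m) * ascCoeff q y ρ m i := by
  rcases lt_trichotomy i (m + 1) with h | rfl | h
  · obtain ⟨k, rfl⟩ : ∃ k, m = i + k := ⟨m - i, by omega⟩
    have hA := (qint_mul_qbinom q (i + k)).1 i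
    have hB := (qint_mul_qbinom q (i + k)).2 i
    rw [show i + k + 1 - i = k + 1 by omega] at hB
    simp only [ascCoeff, show i + k + 2 - i = k + 2 by omega, show i + k + 1 - i = k + 1 by omega,
      show i + k + 1 - (i + 1) = k by omega, show i + k - i = k by omega, Bpoly_succ_succ]
    linear_combination (q ^ (i + k) * ρ ^ (k + 2) * Bpoly q y k) * hB
      - (ρ ^ k * Bpoly q y k) * hA
  · rw [ascCoeff_eq_zero_of_lt q y ρ (by omega : m + 1 < m + 2),
      ascCoeff_eq_zero_of_lt q y ρ (by omega : m < m + 1)]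
    simp [ascCoeff, qbinom_self, Bpoly, mul_comm, mul_left_comm, mul_assoc]
  · simp [ascCoeff_eq_zero_of_lt q y ρ, qbinom_eq_zero_of_lt q h, h, (by omega : m < i)]

lemma sum_ascCoeff_succ_succ (m : ℕ) :
    ∑ i ∈ range (m + 3), ascCoeff q y ρ (m + 2) i * qHermite q x i =
      (x - ρ * y * q ^ (m + 1)) * ∑ i ∈ range (m + 2), ascCoeff q y ρ (m + 1) i * qHermite q x i
        - qint q (m + 1) * (1 - ρ ^ 2 * q ^ m) *
          ∑ i ∈ range (m + 1), ascCoeff q y ρ m i * qHermite q x i := by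
  have lower : ∑ i ∈ range (m + 3),
        qint q (i + 1) * ascCoeff q y ρ (m + 1) (i + 1) * qHermite q x i =
      ∑ i ∈ range (m + 1), qint q (i + 1) * ascCoeff q y ρ (m + 1) (i + 1) * qHermite q x i :=
    eventually_constant_sum (fun i hi => by
      rw [ascCoeff_eq_zero_of_lt q y ρ (by omega : m + 1 < i + 1)]; ring) (by omega)
  calc _ = ∑ i ∈ range (m + 2), ascCoeff q y ρ (m + 1) i * qHermite q x (i + 1) +
        ∑ i ∈ range (m + 3),
          q ^ i * qbinom q (m + 1) i * ρ ^ (m + 2 - i) * Bpoly q y (m + 2 - i) * qHermite q x i :=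
        sum_ascCoeff_succ q x y ρ (m + 1)
    _ = ∑ i ∈ range (m + 2), ascCoeff q y ρ (m + 1) i * qHermite q x (i + 1) +
        ∑ i ∈ range (m + 3),
          (qint q (i + 1) * ascCoeff q y ρ (m + 1) (i + 1) * qHermite q x i
            - ρ * y * q ^ (m + 1) * (ascCoeff q y ρ (m + 1) i * qHermite q x i)
            - qint q (m + 1) * (1 - ρ ^ 2 * q ^ m) * (ascCoeff q y ρ m i * qHermite q x i)) := by
        congr 1
        refine sum_congr rfl fun i _ => ?_
        linear_combination qHermite q x i * ascCoeff_recurrence q y ρ m i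
    _ = _ := by
        rw [sum_sub_distrib, sum_sub_distrib, ← mul_sum, ← mul_sum, lower,
          sum_range_ascCoeff_mul_of_le q y ρ (qHermite q x) (by omega : m + 1 + 1 ≤ m + 3),
          sum_range_ascCoeff_mul_of_le q y ρ (qHermite q x) (by omega : m + 1 ≤ m + 3),
          sub_mul, mul_sum_qHermite]
        ring

end

theorem ASC_eq_sum_B_H (q x y ρ : ℝ) (n : ℕ) :
    ASC q x y ρ n =
      ∑ i ∈ Finset.range (n + 1),
        qbinom q n i * ρ ^ (n - i) * Bpoly q y (n - i) * qHermite q x i := by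
  change ASC q x y ρ n = ∑ i ∈ range (n + 1), ascCoeff q y ρ n i * qHermite q x i
  induction n using Nat.twoStepInduction with
  | zero => simp [ASC, ascCoeff, qbinom, Bpoly, qHermite]
  | one =>
    simp [sum_range_succ, ASC, ascCoeff, qbinom_self, qbinom_zero_right, Bpoly, qHermite,
      sub_eq_neg_add]
  | more m ih₀ ih₁ => rw [ASC_succ_succ, ih₀, ih₁, sum_ascCoeff_succ_succ]
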